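/- Exponential L∞ bound along characteristics: if f is a classical solution of the kinetic Cucker–Smale equation on [0,T] (with a given C¹ vector field u) and f₀ ≥ 0, then for every T' ∈ [0,T] one has sup_{(x,v)} f(T',x,v) ≤ (sup_{(x,v)} f₀(x,v)) · exp( 3(1 + ‖f₀‖_{L¹(ℝ³×ℝ³)}) T' ). -/

import Mathlib

noncomputable section

open MeasureTheory Real

/-- The phase/physical space `ℝ³`. -/
abbrev E3 : Type := EuclideanSpace ℝ (Fin 3)

/-- The Cucker–Smale alignment operator
`L[f](t,x,v) = ∫ φ(|x−y|) f(t,y,v*) (v*−v) dy dv*`. -/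
def Lop (φ : ℝ → ℝ) (f : ℝ → E3 → E3 → ℝ) (t : ℝ) (x v : E3) : E3 :=
  ∫ p : E3 × E3, (φ (dist x p.1) * f t p.1 p.2) • (p.2 - v)

/-- The standing assumptions on the interaction kernel `φ`:
positive on `[0,∞)`, non-increasing, `C¹`, with `max {|φ|, |φ'|} ≤ 1`. -/
structure KernelHyp (φ : ℝ → ℝ) : Prop where
  pos : ∀ r : ℝ, 0 ≤ r → 0 < φ r
  anti : AntitoneOn φ (Set.Ici 0)
  smooth : ContDiff ℝ 1 φ
  bdd : ∀ r : ℝ, 0 ≤ r → |φ r| ≤ 1 ∧ |deriv φ r| ≤ 1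

/-- A classical solution of the kinetic Cucker–Smale equation
`∂ₜ f + v·∇ₓ f + ∇_v·(L[f] f + (u−v) f) = 0` on `[0,T]`, with initial datum `f₀`
and a given velocity field `u`, whose `(x,v)`-support is contained in a fixed
compact set for all times. -/
structure IsKineticCSSol (φ : ℝ → ℝ) (u : ℝ → E3 → E3) (T : ℝ)
    (f₀ : E3 → E3 → ℝ) (f : ℝ → E3 → E3 → ℝ) : Prop where
  contDiff : ContDiff ℝ 1 (fun p : ℝ × E3 × E3 => f p.1 p.2.1 p.2.2)
  pde : ∀ t ∈ Set.Icc (0 : ℝ) T, ∀ x v : E3,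
    deriv (fun s => f s x v) t
      + (∑ i : Fin 3, v i * fderiv ℝ (fun x' => f t x' v) x (EuclideanSpace.single i 1))
      + (∑ i : Fin 3, fderiv ℝ
          (fun v' => (Lop φ f t x v' + (u t x - v')) i * f t x v') v
          (EuclideanSpace.single i 1)) = 0
  init : ∀ x v, f 0 x v = f₀ x v
  suppCompact : ∃ K : Set (E3 × E3), IsCompact K ∧
    ∀ t ∈ Set.Icc (0 : ℝ) T, ∀ x v, f t x v ≠ 0 → (x, v) ∈ K

open Pointwise Filter Topology

/-- For a `C¹` compactly supported function on `E3`, the integral of any directional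
derivative vanishes (translation invariance of Lebesgue measure). -/
lemma integral_fderiv_apply_eq_zero {g : E3 → ℝ} (hg : ContDiff ℝ 1 g)
    (hsupp : HasCompactSupport g) (w : E3) : ∫ x : E3, fderiv ℝ g x w = 0 := by
  have hgc : Continuous g := hg.continuous
  have hdc : Continuous (fderiv ℝ g) := hg.continuous_fderiv one_ne_zero
  obtain ⟨C, hC⟩ : ∃ C, ∀ x, ‖fderiv ℝ g x‖ ≤ C :=
    (hsupp.fderiv ℝ).exists_bound_of_continuous hdc
  set Kb : Set E3 := tsupport g + Metric.closedBall (0 : E3) ‖w‖ with hKb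
  have hKbc : IsCompact Kb := (hsupp.isCompact.add (isCompact_closedBall _ _))
  have key := hasDerivAt_integral_of_dominated_loc_of_deriv_le
    (F := fun (s : ℝ) (x : E3) => g (x + s • w))
    (F' := fun (s : ℝ) (x : E3) => fderiv ℝ g (x + s • w) w)
    (x₀ := (0 : ℝ)) (μ := (volume : Measure E3)) (bound := Kb.indicator fun _ => C * ‖w‖) (Metric.ball_mem_nhds _ one_pos)
    (Filter.Eventually.of_forall fun s =>
      (hgc.comp (continuous_id.add continuous_const)).aestronglyMeasurable)
    (by simpa using hgc.integrable_of_hasCompactSupport hsupp)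
    (((ContinuousLinearMap.apply ℝ ℝ w).continuous.comp
      (hdc.comp (continuous_id.add continuous_const))).aestronglyMeasurable)
    (Filter.Eventually.of_forall fun x => by
      intro s hs
      by_cases hx : x ∈ Kb
      · rw [Set.indicator_of_mem hx]
        exact le_trans ((fderiv ℝ g (x + s • w)).le_opNorm w)
          (mul_le_mul_of_nonneg_right (hC _) (norm_nonneg w))
      · rw [Set.indicator_of_notMem hx]
        have hxs : x + s • w ∉ tsupport g := by
          intro hmem
          refine hx ?_
          rw [hKb]
          refine Set.mem_add.2 ⟨x + s • w, hmem, -(s • w), ?_, by abel⟩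
          simp only [Metric.mem_closedBall, dist_zero_right, norm_neg, norm_smul]
          calc ‖s‖ * ‖w‖ ≤ 1 * ‖w‖ := by
                refine mul_le_mul_of_nonneg_right ?_ (norm_nonneg w)
                simpa [Real.norm_eq_abs] using (le_of_lt (by simpa using hs))
            _ = ‖w‖ := one_mul _
        have h0 : fderiv ℝ g (x + s • w) = 0 :=
          image_eq_zero_of_notMem_tsupport fun h => hxs (tsupport_fderiv_subset ℝ h)
        simp [h0])
    ((integrable_indicator_iff hKbc.isClosed.measurableSet).2
      (integrableOn_const hKbc.measure_lt_top.ne))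
    (Filter.Eventually.of_forall fun x => by
      intro s _
      have h1 : HasDerivAt (fun s' : ℝ => x + s' • w) w s := by
        simpa using ((hasDerivAt_id s).smul_const w).const_add x
      exact ((hg.differentiable one_ne_zero _).hasFDerivAt).comp_hasDerivAt s h1)
  obtain ⟨-, hDeriv⟩ := key
  have hconst : (fun s : ℝ => ∫ x : E3, g (x + s • w)) = fun _ => ∫ x : E3, g x :=
    funext fun s => integral_add_right_eq_self g (s • w)
  rw [hconst] at hDeriv
  have := hDeriv.unique (hasDerivAt_const 0 _)
  simpa using this

def pD (h : ℝ → E3 → E3 → ℝ) (w : ℝ × E3 × E3) (z : ℝ × E3 × E3) : ℝ :=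
  fderiv ℝ (fun p : ℝ × E3 × E3 => h p.1 p.2.1 p.2.2) z w

def mmF (φ : ℝ → ℝ) (f : ℝ → E3 → E3 → ℝ) (t : ℝ) (x : E3) : ℝ :=
  ∫ p : E3 × E3, φ (dist x p.1) * f t p.1 p.2

def AAF (φ : ℝ → ℝ) (f : ℝ → E3 → E3 → ℝ) (t : ℝ) (x : E3) : E3 :=
  ∫ p : E3 × E3, (φ (dist x p.1) * f t p.1 p.2) • p.2

section CS
variable {φ : ℝ → ℝ} {f : ℝ → E3 → E3 → ℝ} {t : ℝ} {K : Set (E3 × E3)}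

lemma kernel_integrable (hφc : Continuous φ)
    (hfc : Continuous fun p : E3 × E3 => f t p.1 p.2)
    (hK : IsCompact K) (hsupp : ∀ x v : E3, f t x v ≠ 0 → (x, v) ∈ K) (x : E3) :
    Integrable (fun p : E3 × E3 => φ (dist x p.1) * f t p.1 p.2) := by
  refine Continuous.integrable_of_hasCompactSupport ?_ ?_
  · exact (hφc.comp (continuous_const.dist (continuous_fst))).mul hfc
  · refine HasCompactSupport.intro hK fun p hp => ?_
    have : f t p.1 p.2 = 0 := by
      by_contra h; exact hp (hsupp p.1 p.2 h)
    simp [this]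

lemma kernel_integrable' (hφc : Continuous φ)
    (hfc : Continuous fun p : E3 × E3 => f t p.1 p.2)
    (hK : IsCompact K) (hsupp : ∀ x v : E3, f t x v ≠ 0 → (x, v) ∈ K) (x : E3) :
    Integrable (fun p : E3 × E3 => (φ (dist x p.1) * f t p.1 p.2) • p.2) := by
  refine Continuous.integrable_of_hasCompactSupport ?_ ?_
  · exact ((hφc.comp (continuous_const.dist continuous_fst)).mul hfc).smul
      (continuous_snd)
  · refine HasCompactSupport.intro hK fun p hp => ?_
    have : f t p.1 p.2 = 0 := by
      by_contra h; exact hp (hsupp p.1 p.2 h)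
    simp [this]

lemma Lop_eq (hφc : Continuous φ)
    (hfc : Continuous fun p : E3 × E3 => f t p.1 p.2)
    (hK : IsCompact K) (hsupp : ∀ x v : E3, f t x v ≠ 0 → (x, v) ∈ K) (x v : E3) :
    Lop φ f t x v = AAF φ f t x - mmF φ f t x • v := by
  have h1 := kernel_integrable' hφc hfc hK hsupp x
  have h2 := (kernel_integrable hφc hfc hK hsupp x).smul_const v
  rw [Lop, AAF, mmF]
  calc ∫ p : E3 × E3, (φ (dist x p.1) * f t p.1 p.2) • (p.2 - v)
      = ∫ p : E3 × E3, ((φ (dist x p.1) * f t p.1 p.2) • p.2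
          - (φ (dist x p.1) * f t p.1 p.2) • v) := by
        congr 1; funext p; rw [smul_sub]
    _ = (∫ p : E3 × E3, (φ (dist x p.1) * f t p.1 p.2) • p.2)
          - ∫ p : E3 × E3, (φ (dist x p.1) * f t p.1 p.2) • v := integral_sub h1 h2
    _ = _ := by rw [integral_smul_const]

lemma mmF_cont (hφc : Continuous φ) (hφ1 : ∀ r : ℝ, 0 ≤ r → |φ r| ≤ 1)
    (hfc : Continuous fun p : E3 × E3 => f t p.1 p.2)
    (hK : IsCompact K) (hsupp : ∀ x v : E3, f t x v ≠ 0 → (x, v) ∈ K) :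
    Continuous (mmF φ f t) := by
  obtain ⟨C, hC⟩ := hK.exists_bound_of_continuousOn hfc.continuousOn
  refine continuous_of_dominated (bound := K.indicator fun _ => C)
    (fun x => ((hφc.comp (continuous_const.dist continuous_fst)).mul hfc).aestronglyMeasurable)
    (fun x => Filter.Eventually.of_forall fun p => ?_)
    ((integrable_indicator_iff hK.isClosed.measurableSet).2
      (integrableOn_const hK.measure_lt_top.ne))
    (Filter.Eventually.of_forall fun p =>
      (hφc.comp (continuous_id.dist continuous_const)).mul continuous_const)
  by_cases hp : p ∈ K
  · rw [Set.indicator_of_mem hp]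
    have h1 : |φ (dist x p.1)| ≤ 1 := hφ1 _ dist_nonneg
    have h2 : ‖f t p.1 p.2‖ ≤ C := hC p hp
    calc ‖φ (dist x p.1) * f t p.1 p.2‖ = |φ (dist x p.1)| * ‖f t p.1 p.2‖ := by
          rw [norm_mul]; rfl
      _ ≤ 1 * C := mul_le_mul h1 h2 (norm_nonneg _) zero_le_one
      _ = C := one_mul C
  · rw [Set.indicator_of_notMem hp]
    have : f t p.1 p.2 = 0 := by by_contra h; exact hp (hsupp p.1 p.2 h)
    simp [this]

lemma AAF_cont (hφc : Continuous φ) (hφ1 : ∀ r : ℝ, 0 ≤ r → |φ r| ≤ 1)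
    (hfc : Continuous fun p : E3 × E3 => f t p.1 p.2)
    (hK : IsCompact K) (hsupp : ∀ x v : E3, f t x v ≠ 0 → (x, v) ∈ K) :
    Continuous (AAF φ f t) := by
  obtain ⟨C, hC⟩ := hK.exists_bound_of_continuousOn hfc.continuousOn
  obtain ⟨R, hR⟩ := hK.isBounded.subset_closedBall 0
  refine continuous_of_dominated (bound := K.indicator fun _ => C * R)
    (fun x => (((hφc.comp (continuous_const.dist continuous_fst)).mul hfc).smul
      continuous_snd).aestronglyMeasurable)
    (fun x => Filter.Eventually.of_forall fun p => ?_)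
    ((integrable_indicator_iff hK.isClosed.measurableSet).2
      (integrableOn_const hK.measure_lt_top.ne))
    (Filter.Eventually.of_forall fun p =>
      ((hφc.comp (continuous_id.dist continuous_const)).mul continuous_const).smul
        continuous_const)
  by_cases hp : p ∈ K
  · rw [Set.indicator_of_mem hp]
    have h1 : |φ (dist x p.1)| ≤ 1 := hφ1 _ dist_nonneg
    have h2 : ‖f t p.1 p.2‖ ≤ C := hC p hp
    have h0C : (0:ℝ) ≤ C := le_trans (norm_nonneg _) h2
    have h3 : ‖p.2‖ ≤ R := by
      have := hR hp
      rw [Metric.mem_closedBall, dist_zero_right] at this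
      exact le_trans (le_max_right ‖p.1‖ ‖p.2‖) (by rw [← Prod.norm_def]; exact this)
    calc ‖(φ (dist x p.1) * f t p.1 p.2) • p.2‖
        = ‖φ (dist x p.1) * f t p.1 p.2‖ * ‖p.2‖ := norm_smul _ _
      _ ≤ (1 * C) * R := by
          refine mul_le_mul ?_ h3 (norm_nonneg _) (by linarith)
          calc ‖φ (dist x p.1) * f t p.1 p.2‖ = |φ (dist x p.1)| * ‖f t p.1 p.2‖ := by
                rw [norm_mul]; rfl
            _ ≤ 1 * C := mul_le_mul h1 h2 (norm_nonneg _) zero_le_one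
      _ = C * R := by ring
  · rw [Set.indicator_of_notMem hp]
    have : f t p.1 p.2 = 0 := by by_contra h; exact hp (hsupp p.1 p.2 h)
    simp [this]
end CS

lemma pD_cont {h : ℝ → E3 → E3 → ℝ}
    (hh : ContDiff ℝ 1 (fun p : ℝ × E3 × E3 => h p.1 p.2.1 p.2.2)) (w : ℝ × E3 × E3) :
    Continuous (pD h w) :=
  (ContinuousLinearMap.apply ℝ ℝ w).continuous.comp (hh.continuous_fderiv one_ne_zero)

lemma hasDerivAt_sect_t {h : ℝ → E3 → E3 → ℝ}
    (hh : ContDiff ℝ 1 (fun p : ℝ × E3 × E3 => h p.1 p.2.1 p.2.2)) (t : ℝ) (x v : E3) :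
    HasDerivAt (fun s => h s x v) (pD h (1, 0, 0) (t, x, v)) t :=
  ((hh.differentiable one_ne_zero _).hasFDerivAt).comp_hasDerivAt t
    (HasDerivAt.prodMk (hasDerivAt_id t) (HasDerivAt.prodMk (hasDerivAt_const t x) (hasDerivAt_const t v)))

lemma deriv_sect_t {h : ℝ → E3 → E3 → ℝ}
    (hh : ContDiff ℝ 1 (fun p : ℝ × E3 × E3 => h p.1 p.2.1 p.2.2)) (t : ℝ) (x v : E3) :
    deriv (fun s => h s x v) t = pD h (1, 0, 0) (t, x, v) :=
  (hasDerivAt_sect_t hh t x v).deriv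

lemma hasFDerivAt_sect_x {h : ℝ → E3 → E3 → ℝ}
    (hh : ContDiff ℝ 1 (fun p : ℝ × E3 × E3 => h p.1 p.2.1 p.2.2)) (t : ℝ) (x v : E3) :
    HasFDerivAt (fun x' => h t x' v)
      ((fderiv ℝ (fun p : ℝ × E3 × E3 => h p.1 p.2.1 p.2.2) (t, x, v)).comp
        ((0 : E3 →L[ℝ] ℝ).prod ((ContinuousLinearMap.id ℝ E3).prod 0))) x :=
  ((hh.differentiable one_ne_zero _).hasFDerivAt).comp x
    (HasFDerivAt.prodMk (hasFDerivAt_const t x) (HasFDerivAt.prodMk (hasFDerivAt_id x) (hasFDerivAt_const v x)))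

lemma fderiv_sect_x_apply {h : ℝ → E3 → E3 → ℝ}
    (hh : ContDiff ℝ 1 (fun p : ℝ × E3 × E3 => h p.1 p.2.1 p.2.2)) (t : ℝ) (x v w : E3) :
    fderiv ℝ (fun x' => h t x' v) x w = pD h (0, w, 0) (t, x, v) := by
  rw [(hasFDerivAt_sect_x hh t x v).fderiv]
  simp [pD]

lemma hasFDerivAt_sect_v {h : ℝ → E3 → E3 → ℝ}
    (hh : ContDiff ℝ 1 (fun p : ℝ × E3 × E3 => h p.1 p.2.1 p.2.2)) (t : ℝ) (x v : E3) :
    HasFDerivAt (fun v' => h t x v')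
      ((fderiv ℝ (fun p : ℝ × E3 × E3 => h p.1 p.2.1 p.2.2) (t, x, v)).comp
        ((0 : E3 →L[ℝ] ℝ).prod ((0 : E3 →L[ℝ] E3).prod (ContinuousLinearMap.id ℝ E3)))) v :=
  ((hh.differentiable one_ne_zero _).hasFDerivAt).comp v
    (HasFDerivAt.prodMk (hasFDerivAt_const t v) (HasFDerivAt.prodMk (hasFDerivAt_const x v) (hasFDerivAt_id v)))

lemma fderiv_sect_v_apply {h : ℝ → E3 → E3 → ℝ}
    (hh : ContDiff ℝ 1 (fun p : ℝ × E3 × E3 => h p.1 p.2.1 p.2.2)) (t : ℝ) (x v w : E3) :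
    fderiv ℝ (fun v' => h t x v') v w = pD h (0, 0, w) (t, x, v) := by
  rw [(hasFDerivAt_sect_v hh t x v).fderiv]
  simp [pD]

lemma contDiff_sect_v {h : ℝ → E3 → E3 → ℝ}
    (hh : ContDiff ℝ 1 (fun p : ℝ × E3 × E3 => h p.1 p.2.1 p.2.2)) (t : ℝ) (x : E3) :
    ContDiff ℝ 1 (fun v' => h t x v') :=
  hh.comp (contDiff_const.prodMk (contDiff_const.prodMk contDiff_id))

lemma contDiff_sect_x {h : ℝ → E3 → E3 → ℝ}
    (hh : ContDiff ℝ 1 (fun p : ℝ × E3 × E3 => h p.1 p.2.1 p.2.2)) (t : ℝ) (v : E3) :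
    ContDiff ℝ 1 (fun x' => h t x' v) :=
  hh.comp (contDiff_const.prodMk (contDiff_id.prodMk contDiff_const))

section CS3
variable {φ : ℝ → ℝ} {f : ℝ → E3 → E3 → ℝ} {t : ℝ} {K : Set (E3 × E3)}

lemma fderiv_flux_term (hφc : Continuous φ)
    (hfC : ContDiff ℝ 1 (fun p : ℝ × E3 × E3 => f p.1 p.2.1 p.2.2))
    (hK : IsCompact K) (hsupp : ∀ x v : E3, f t x v ≠ 0 → (x, v) ∈ K)
    (w : E3) (x v : E3) (i : Fin 3) :
    fderiv ℝ (fun v' => (Lop φ f t x v' + (w - v')) i * f t x v') v (EuclideanSpace.single i 1)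
      = (Lop φ f t x v + (w - v)) i * pD f (0, 0, EuclideanSpace.single i 1) (t, x, v)
        - (mmF φ f t x + 1) * f t x v := by
  have hfc : Continuous fun p : E3 × E3 => f t p.1 p.2 :=
    hfC.continuous.comp (continuous_const.prodMk continuous_id)
  have hLeq : ∀ v' : E3, Lop φ f t x v' = AAF φ f t x - mmF φ f t x • v' :=
    Lop_eq hφc hfc hK hsupp x
  have hfun : ∀ v' : E3, (Lop φ f t x v' + (w - v')) i
      = ((AAF φ f t x) i + w i) - (mmF φ f t x + 1) * v' i := by
    intro v'
    rw [hLeq v']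
    simp only [PiLp.add_apply, PiLp.sub_apply, PiLp.smul_apply, smul_eq_mul]
    ring
  have hproj : HasFDerivAt (fun v' : E3 => v' i) (EuclideanSpace.proj (𝕜 := ℝ) i) v :=
    (EuclideanSpace.proj (𝕜 := ℝ) i).hasFDerivAt
  have hVder : HasFDerivAt (fun v' : E3 => ((AAF φ f t x) i + w i) - (mmF φ f t x + 1) * v' i)
      (-((mmF φ f t x + 1) • (EuclideanSpace.proj (𝕜 := ℝ) i))) v :=
    HasFDerivAt.const_sub (hproj.const_mul (mmF φ f t x + 1)) _
  have hfv := hasFDerivAt_sect_v hfC t x v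
  have hprod : HasFDerivAt (fun v' : E3 => (((AAF φ f t x) i + w i) - (mmF φ f t x + 1) * v' i) * f t x v') _ v := hVder.mul hfv
  rw [show (fun v' : E3 => (Lop φ f t x v' + (w - v')) i * f t x v')
      = fun v' : E3 => ((((AAF φ f t x) i + w i) - (mmF φ f t x + 1) * v' i) * f t x v') by
    funext v'; rw [hfun v']]
  rw [hprod.fderiv, hfun v]
  simp only [ContinuousLinearMap.add_apply, ContinuousLinearMap.smul_apply,
    ContinuousLinearMap.neg_apply, ContinuousLinearMap.coe_comp', Function.comp_apply,
    ContinuousLinearMap.prod_apply, ContinuousLinearMap.zero_apply,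
    ContinuousLinearMap.coe_id', id_eq, smul_eq_mul]
  have hps : (EuclideanSpace.proj (𝕜 := ℝ) i) (EuclideanSpace.single i (1:ℝ)) = 1 := by
    simp [EuclideanSpace.single_apply]
  rw [hps]
  simp only [pD]
  ring
end CS3

lemma sup_gronwall (G : ℝ → E3 → E3 → ℝ)
    (hGc : Continuous fun p : ℝ × E3 × E3 => G p.1 p.2.1 p.2.2)
    (hGd : ∀ (x v : E3), Differentiable ℝ (fun s => G s x v))
    (hpDc : Continuous fun z : ℝ × E3 × E3 => deriv (fun s => G s z.2.1 z.2.2) z.1)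
    (S : Set (E3 × E3)) (hS : IsCompact S) (hSne : S.Nonempty)
    {T' c δ : ℝ}
    (hkey : ∀ t ∈ Set.Icc (0:ℝ) T', ∀ p : E3 × E3,
      (∀ p' : E3 × E3, G t p'.1 p'.2 ≤ G t p.1 p.2) →
      deriv (fun s => G s p.1 p.2) t ≤ c * G t p.1 p.2)
    (hglob : ∀ t ∈ Set.Icc (0:ℝ) T', ∀ p' : E3 × E3,
      G t p'.1 p'.2 ≤ sSup ((fun p : E3 × E3 => G t p.1 p.2) '' S))
    (hδ0 : sSup ((fun p : E3 × E3 => G 0 p.1 p.2) '' S) ≤ δ) :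
    ∀ t ∈ Set.Icc (0:ℝ) T',
      sSup ((fun p : E3 × E3 => G t p.1 p.2) '' S) ≤ δ * Real.exp (c * t) := by
  set M : ℝ → ℝ := fun t => sSup ((fun p : E3 × E3 => G t p.1 p.2) '' S) with hMdef
  have hGtc : ∀ t, Continuous fun p : E3 × E3 => G t p.1 p.2 := fun t =>
    hGc.comp (Continuous.prodMk continuous_const continuous_id)
  have himg : ∀ t, IsCompact ((fun p : E3 × E3 => G t p.1 p.2) '' S) := fun t =>
    hS.image (hGtc t)
  have hne : ∀ t, ((fun p : E3 × E3 => G t p.1 p.2) '' S).Nonempty := fun t =>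
    hSne.image _
  have hbdd : ∀ t, BddAbove ((fun p : E3 × E3 => G t p.1 p.2) '' S) := fun t =>
    (himg t).bddAbove
  have hmax : ∀ t, ∃ p, p ∈ S ∧ G t p.1 p.2 = M t := by
    intro t
    obtain ⟨p, hpS, hmaxp⟩ := hS.exists_isMaxOn hSne (hGtc t).continuousOn
    refine ⟨p, hpS, ?_⟩
    exact (IsGreatest.csSup_eq ⟨Set.mem_image_of_mem _ hpS,
      fun y hy => by obtain ⟨p', hp', rfl⟩ := hy; exact hmaxp hp'⟩ :
        sSup ((fun p : E3 × E3 => G t p.1 p.2) '' S) = G t p.1 p.2).symm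
  have hle_M : ∀ t, ∀ p ∈ S, G t p.1 p.2 ≤ M t := fun t p hp =>
    le_csSup (hbdd t) (Set.mem_image_of_mem _ hp)
  -- continuity of M
  have hMcont : Continuous M := by
    rw [Metric.continuous_iff]
    intro t₀ ε hε
    have hUc : IsCompact (Set.Icc (t₀ - 1) (t₀ + 1) ×ˢ S) := isCompact_Icc.prod hS
    have huc := hUc.uniformContinuousOn_of_continuous hGc.continuousOn
    rw [Metric.uniformContinuousOn_iff] at huc
    obtain ⟨δ', hδ'pos, hδ'⟩ := huc (ε / 2) (by linarith)
    refine ⟨min δ' 1, lt_min hδ'pos one_pos, fun s hst => ?_⟩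
    have hd1 : dist s t₀ < δ' := lt_of_lt_of_le hst (min_le_left _ _)
    have hd2 : dist s t₀ < 1 := lt_of_lt_of_le hst (min_le_right _ _)
    rw [Real.dist_eq] at hd2
    obtain ⟨hd2a, hd2b⟩ := abs_lt.mp hd2
    have hsI : s ∈ Set.Icc (t₀ - 1) (t₀ + 1) := ⟨by linarith, by linarith⟩
    have ht₀I : t₀ ∈ Set.Icc (t₀ - 1) (t₀ + 1) := ⟨by linarith, by linarith⟩
    have hpair : ∀ p ∈ S, |G s p.1 p.2 - G t₀ p.1 p.2| ≤ ε / 2 := by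
      intro p hp
      have hd : dist ((s, p) : ℝ × (E3 × E3)) (t₀, p) < δ' := by
        rw [Prod.dist_eq]
        simp only [dist_self]
        exact max_lt hd1 hδ'pos
      have := hδ' (s, p) (Set.mk_mem_prod hsI hp) (t₀, p) (Set.mk_mem_prod ht₀I hp) hd
      rw [Real.dist_eq] at this
      exact this.le
    have h1 : M s ≤ M t₀ + ε / 2 := csSup_le (hne s) (by
      rintro y ⟨p, hp, rfl⟩
      have hh := (abs_sub_le_iff.mp (hpair p hp)).1
      have h2 := hle_M t₀ p hp
      linarith)
    have h2 : M t₀ ≤ M s + ε / 2 := csSup_le (hne t₀) (by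
      rintro y ⟨p, hp, rfl⟩
      have hh := (abs_sub_le_iff.mp (hpair p hp)).2
      have h2 := hle_M s p hp
      linarith)
    rw [Real.dist_eq]
    have : |M s - M t₀| ≤ ε / 2 := abs_sub_le_iff.mpr ⟨by linarith, by linarith⟩
    linarith
  -- choose maximizers
  choose P hPS hPval using hmax
  -- Dini-type estimate
  have hdini : ∀ t ∈ Set.Ico (0:ℝ) T', ∀ r, c * M t < r →
      ∃ᶠ z in 𝓝[>] t, (z - t)⁻¹ * (M z - M t) < r := by
    intro t ht r hr
    by_contra hfreq
    rw [Filter.not_frequently] at hfreq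
    have hev : ∀ᶠ z in 𝓝[>] t, r ≤ (z - t)⁻¹ * (M z - M t) := by
      filter_upwards [hfreq] with z hz using not_lt.mp hz
    obtain ⟨z0, hz0⟩ := Filter.exists_seq_tendsto (𝓝[>] t)
    have hz0t : Tendsto z0 atTop (𝓝 t) := hz0.mono_right nhdsWithin_le_nhds
    have hgt : ∀ᶠ n in atTop, t < z0 n := hz0.eventually self_mem_nhdsWithin
    have hq : ∀ᶠ n in atTop, r ≤ (z0 n - t)⁻¹ * (M (z0 n) - M t) := hz0.eventually hev
    obtain ⟨N, hN⟩ := Filter.eventually_atTop.mp (hgt.and hq)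
    set z : ℕ → ℝ := fun n => z0 (n + N) with hzdef
    have hz1 : ∀ n, t < z n := fun n => (hN (n + N) (Nat.le_add_left N n)).1
    have hz2 : ∀ n, r ≤ (z n - t)⁻¹ * (M (z n) - M t) := fun n =>
      (hN (n + N) (Nat.le_add_left N n)).2
    have hzt : Tendsto z atTop (𝓝 t) := hz0t.comp (tendsto_add_atTop_nat N)
    obtain ⟨pb, hpbS, ψ, hψ, hplim⟩ := hS.tendsto_subseq (fun n => hPS (z n))
    -- MVT
    have hMVT : ∀ n, ∃ τ ∈ Set.Ioo t (z n),
        deriv (fun s => G s (P (z n)).1 (P (z n)).2) τ =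
          (G (z n) (P (z n)).1 (P (z n)).2 - G t (P (z n)).1 (P (z n)).2) / (z n - t) := by
      intro n
      exact exists_hasDerivAt_eq_slope _ _ (hz1 n)
        ((hGd _ _).continuous.continuousOn)
        (fun s _ => ((hGd (P (z n)).1 (P (z n)).2) s).hasDerivAt)
    choose τ hτmem hτval using hMVT
    have hrle : ∀ n, r ≤ deriv (fun s => G s (P (z n)).1 (P (z n)).2) (τ n) := by
      intro n
      have hpos : 0 < z n - t := sub_pos.mpr (hz1 n)
      have hM1 : G (z n) (P (z n)).1 (P (z n)).2 = M (z n) := hPval (z n)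
      have hM2 : G t (P (z n)).1 (P (z n)).2 ≤ M t := hle_M t _ (hPS (z n))
      calc r ≤ (z n - t)⁻¹ * (M (z n) - M t) := hz2 n
        _ ≤ (z n - t)⁻¹ * (G (z n) (P (z n)).1 (P (z n)).2 -
              G t (P (z n)).1 (P (z n)).2) := by
            apply mul_le_mul_of_nonneg_left _ (inv_nonneg.mpr hpos.le)
            linarith
        _ = _ := by rw [hτval n, div_eq_inv_mul]
    -- pass to the limit along the subsequence
    have hψtop : Tendsto ψ atTop atTop := hψ.tendsto_atTop
    have hτt : Tendsto (fun n => τ (ψ n)) atTop (𝓝 t) :=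
      tendsto_of_tendsto_of_tendsto_of_le_of_le tendsto_const_nhds (hzt.comp hψtop)
        (fun n => (hτmem (ψ n)).1.le) (fun n => (hτmem (ψ n)).2.le)
    have hzz : Tendsto (fun n => ((τ (ψ n), P (z (ψ n))) : ℝ × (E3 × E3))) atTop
        (𝓝 (t, pb)) := hτt.prodMk_nhds hplim
    have hDlim : Tendsto (fun n => deriv (fun s => G s (P (z (ψ n))).1 (P (z (ψ n))).2)
        (τ (ψ n))) atTop (𝓝 (deriv (fun s => G s pb.1 pb.2) t)) :=
      (hpDc.tendsto ((t, pb) : ℝ × (E3 × E3))).comp hzz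
    have hrlim : r ≤ deriv (fun s => G s pb.1 pb.2) t :=
      ge_of_tendsto hDlim (Filter.Eventually.of_forall fun n => hrle (ψ n))
    have hGpb : G t pb.1 pb.2 = M t := by
      have hzψ : Tendsto (fun n => ((z (ψ n), P (z (ψ n))) : ℝ × (E3 × E3))) atTop
          (𝓝 (t, pb)) := (hzt.comp hψtop).prodMk_nhds hplim
      have h1 : Tendsto (fun n => G (z (ψ n)) (P (z (ψ n))).1 (P (z (ψ n))).2) atTop
          (𝓝 (G t pb.1 pb.2)) := (hGc.tendsto ((t, pb) : ℝ × (E3 × E3))).comp hzψ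
      have h2 : Tendsto (fun n => M (z (ψ n))) atTop (𝓝 (M t)) :=
        (hMcont.tendsto t).comp (hzt.comp hψtop)
      have h3 : (fun n => G (z (ψ n)) (P (z (ψ n))).1 (P (z (ψ n))).2) =
          fun n => M (z (ψ n)) := funext fun n => hPval (z (ψ n))
      exact tendsto_nhds_unique (h3 ▸ h1) h2
    have hglobmax : ∀ p' : E3 × E3, G t p'.1 p'.2 ≤ G t pb.1 pb.2 := by
      rw [hGpb]; exact hglob t ⟨ht.1, ht.2.le⟩
    have hkey' := hkey t ⟨ht.1, ht.2.le⟩ pb hglobmax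
    rw [hGpb] at hkey'
    exact absurd (hrlim.trans hkey') (not_le.mpr hr)
  intro t ht
  have hB := le_gronwallBound_of_liminf_deriv_right_le (f := M) (f' := fun s => c * M s)
    (δ := δ) (K := c) (ε := 0) (a := 0) (b := T') hMcont.continuousOn hdini hδ0
    (fun s _ => by simp) t ht
  simpa [gronwallBound_ε0, sub_zero] using hB

/-- **Exponential `L^∞` bound along characteristics**: if `f` is a classical solution of the
kinetic Cucker–Smale equation on `[0,T]` (with a given `C¹` vector field `u`) and `f₀ ≥ 0`,
then for every `T' ∈ [0,T]`,
`sup f(T',·,·) ≤ (sup f₀) · exp( 3 (1 + ‖f₀‖_{L¹}) T' )`. -/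
theorem linfty_bound_kineticCS
    (φ : ℝ → ℝ) (hφ : KernelHyp φ) (T : ℝ) (hT : 0 ≤ T)
    (u : ℝ → E3 → E3) (hu : ContDiff ℝ 1 (fun p : ℝ × E3 => u p.1 p.2))
    (f₀ : E3 → E3 → ℝ) (f : ℝ → E3 → E3 → ℝ)
    (hf : IsKineticCSSol φ u T f₀ f)
    (hf₀ : ∀ x v : E3, 0 ≤ f₀ x v) :
    ∀ T' ∈ Set.Icc (0 : ℝ) T,
      (⨆ p : E3 × E3, f T' p.1 p.2)
        ≤ (⨆ p : E3 × E3, f₀ p.1 p.2)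
          * Real.exp (3 * (1 + ∫ p : E3 × E3, |f₀ p.1 p.2|) * T') := by
  intro T' hT'
  classical
  obtain ⟨K, hK, hKsupp⟩ := hf.suppCompact
  have hFC : ContDiff ℝ 1 (fun p : ℝ × E3 × E3 => f p.1 p.2.1 p.2.2) := hf.contDiff
  have hFc : Continuous (fun p : ℝ × E3 × E3 => f p.1 p.2.1 p.2.2) := hFC.continuous
  have hφc : Continuous φ := hφ.smooth.continuous
  have hφ1 : ∀ r : ℝ, 0 ≤ r → |φ r| ≤ 1 := fun r hr => (hφ.bdd r hr).1
  have hfc : ∀ t : ℝ, Continuous fun p : E3 × E3 => f t p.1 p.2 := fun t =>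
    hFc.comp (continuous_const.prodMk continuous_id)
  -- a point outside the support
  obtain ⟨q, hq⟩ : ∃ q : E3 × E3, q ∉ K := by
    by_contra h
    push_neg at h
    exact hK.ne_univ (Set.eq_univ_of_forall h)
  set S : Set (E3 × E3) := insert q K with hSdef
  have hS : IsCompact S := hK.insert q
  have hSne : S.Nonempty := ⟨q, Set.mem_insert q K⟩
  have hf0 : ∀ t ∈ Set.Icc (0:ℝ) T, ∀ p : E3 × E3, p ∉ K → f t p.1 p.2 = 0 := by
    intro t ht p hp
    by_contra h
    exact hp (hKsupp t ht p.1 p.2 h)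
  -- vanishing of section gradients off K
  have hx0 : ∀ t ∈ Set.Icc (0:ℝ) T, ∀ p : E3 × E3, p ∉ K → ∀ w : E3,
      pD f (0, w, 0) (t, p.1, p.2) = 0 := by
    intro t ht p hp w
    rw [← fderiv_sect_x_apply hFC t p.1 p.2 w]
    have hUo : IsOpen {x' : E3 | (x', p.2) ∉ K} :=
      hK.isClosed.isOpen_compl.preimage (continuous_id.prodMk continuous_const)
    have hU : {x' : E3 | (x', p.2) ∉ K} ∈ nhds p.1 := hUo.mem_nhds (by simpa using hp)
    have heq : (fun x' => f t x' p.2) =ᶠ[nhds p.1] fun _ => (0:ℝ) :=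
      Filter.eventuallyEq_of_mem hU fun x' hx' => hf0 t ht (x', p.2) hx'
    rw [heq.fderiv_eq]
    simp
  have hv0 : ∀ t ∈ Set.Icc (0:ℝ) T, ∀ p : E3 × E3, p ∉ K → ∀ w : E3,
      pD f (0, 0, w) (t, p.1, p.2) = 0 := by
    intro t ht p hp w
    rw [← fderiv_sect_v_apply hFC t p.1 p.2 w]
    have hUo : IsOpen {v' : E3 | (p.1, v') ∉ K} :=
      hK.isClosed.isOpen_compl.preimage (continuous_const.prodMk continuous_id)
    have hU : {v' : E3 | (p.1, v') ∉ K} ∈ nhds p.2 := hUo.mem_nhds (by simpa using hp)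
    have heq : (fun v' => f t p.1 v') =ᶠ[nhds p.2] fun _ => (0:ℝ) :=
      Filter.eventuallyEq_of_mem hU fun v' hv' => hf0 t ht (p.1, v') hv'
    rw [heq.fderiv_eq]
    simp
  -- PDE rewritten
  have hTsum : ∀ t ∈ Set.Icc (0:ℝ) T, ∀ x v : E3,
      pD f (1, 0, 0) (t, x, v)
        = -((∑ i : Fin 3, v i * pD f (0, EuclideanSpace.single i 1, 0) (t, x, v))
            + (∑ i : Fin 3, ((Lop φ f t x v + (u t x - v)) i
                * pD f (0, 0, EuclideanSpace.single i 1) (t, x, v)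
                - (mmF φ f t x + 1) * f t x v))) := by
    intro t ht x v
    have hp := hf.pde t ht x v
    rw [deriv_sect_t hFC] at hp
    have h1 : (∑ i : Fin 3, v i * fderiv ℝ (fun x' => f t x' v) x (EuclideanSpace.single i 1))
        = ∑ i : Fin 3, v i * pD f (0, EuclideanSpace.single i 1, 0) (t, x, v) :=
      Finset.sum_congr rfl fun i _ => by rw [fderiv_sect_x_apply hFC]
    have h2 : (∑ i : Fin 3, fderiv ℝ
          (fun v' => (Lop φ f t x v' + (u t x - v')) i * f t x v') v
          (EuclideanSpace.single i 1))
        = ∑ i : Fin 3, ((Lop φ f t x v + (u t x - v)) i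
            * pD f (0, 0, EuclideanSpace.single i 1) (t, x, v)
            - (mmF φ f t x + 1) * f t x v) :=
      Finset.sum_congr rfl fun i _ =>
        fderiv_flux_term hφc hFC hK (fun a b => hKsupp t ht a b) (u t x) x v i
    rw [h1, h2] at hp
    linarith
  -- time derivative vanishes off K
  have ht0 : ∀ t ∈ Set.Icc (0:ℝ) T, ∀ p : E3 × E3, p ∉ K →
      pD f (1, 0, 0) (t, p.1, p.2) = 0 := by
    intro t ht p hp
    rw [hTsum t ht p.1 p.2]
    have e3 : f t p.1 p.2 = 0 := hf0 t ht p hp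
    simp [hx0 t ht p hp, hv0 t ht p hp, e3]
  -- mass conservation
  have hJ : ∀ t ∈ Set.Icc (0:ℝ) T,
      (∫ p : E3 × E3, f t p.1 p.2) = ∫ p : E3 × E3, f 0 p.1 p.2 := by
    have hKm : MeasurableSet K := hK.isClosed.measurableSet
    set J : ℝ → ℝ := fun t => ∫ p in K, f t p.1 p.2 with hJdef
    have hJd : ∀ t : ℝ, HasDerivAt J (∫ p in K, pD f (1, 0, 0) (t, p.1, p.2)) t := by
      intro t
      obtain ⟨C, hC⟩ := ((isCompact_Icc (a := t - 1) (b := t + 1)).prod hK).exists_bound_of_continuousOn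
        ((pD_cont hFC (1, 0, 0)).continuousOn)
      have key := hasDerivAt_integral_of_dominated_loc_of_deriv_le
        (μ := (volume : Measure (E3 × E3)).restrict K)
        (F := fun s (p : E3 × E3) => f s p.1 p.2)
        (F' := fun s (p : E3 × E3) => pD f (1, 0, 0) (s, p.1, p.2))
        (x₀ := t) (bound := fun _ => C) (Metric.ball_mem_nhds _ one_pos)
        (Filter.Eventually.of_forall fun s => ((hfc s).aestronglyMeasurable).restrict)
        ((hfc t).continuousOn.integrableOn_compact hK)
        (((pD_cont hFC (1, 0, 0)).comp
          (continuous_const.prodMk continuous_id)).aestronglyMeasurable.restrict)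
        ((ae_restrict_iff' hKm).2 (Filter.Eventually.of_forall fun p hp s hs => by
          have hsI : s ∈ Set.Icc (t - 1) (t + 1) := by
            rw [Metric.mem_ball, Real.dist_eq] at hs
            obtain ⟨h1, h2⟩ := abs_lt.mp hs
            exact ⟨by linarith, by linarith⟩
          exact hC (s, p) ⟨hsI, hp⟩))
        (integrableOn_const hK.measure_lt_top.ne)
        (Filter.Eventually.of_forall fun p s _ => hasDerivAt_sect_t hFC s p.1 p.2)
      exact key.2
    have hJzero : ∀ t ∈ Set.Icc (0:ℝ) T, HasDerivAt J 0 t := by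
      intro t ht
      have hsuppt : ∀ a b : E3, f t a b ≠ 0 → (a, b) ∈ K := fun a b => hKsupp t ht a b
      have h1 : (∫ p in K, pD f (1, 0, 0) (t, p.1, p.2))
          = ∫ p : E3 × E3, pD f (1, 0, 0) (t, p.1, p.2) :=
        setIntegral_eq_integral_of_forall_compl_eq_zero fun p hp => ht0 t ht p hp
      have happly : ∀ i : Fin 3, Continuous fun y : E3 => y i := fun i =>
        (EuclideanSpace.proj (𝕜 := ℝ) i).continuous
      set T1 : Fin 3 → (E3 × E3) → ℝ :=
        fun i p => p.2 i * pD f (0, EuclideanSpace.single i 1, 0) (t, p.1, p.2) with hT1def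
      set T2 : Fin 3 → (E3 × E3) → ℝ := fun i p =>
        (Lop φ f t p.1 p.2 + (u t p.1 - p.2)) i
          * pD f (0, 0, EuclideanSpace.single i 1) (t, p.1, p.2)
          - (mmF φ f t p.1 + 1) * f t p.1 p.2 with hT2def
      have hLc : Continuous fun p : E3 × E3 => Lop φ f t p.1 p.2 := by
        have heq : (fun p : E3 × E3 => Lop φ f t p.1 p.2)
            = fun p : E3 × E3 => AAF φ f t p.1 - mmF φ f t p.1 • p.2 :=
          funext fun p => Lop_eq hφc (hfc t) hK hsuppt p.1 p.2
        rw [heq]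
        exact ((AAF_cont hφc hφ1 (hfc t) hK hsuppt).comp continuous_fst).sub
          (((mmF_cont hφc hφ1 (hfc t) hK hsuppt).comp continuous_fst).smul continuous_snd)
      have hputc : Continuous fun p : E3 × E3 => u t p.1 :=
        (hu.continuous.comp (continuous_const.prodMk continuous_id)).comp continuous_fst
      have hT1c : ∀ i, Continuous (T1 i) := fun i =>
        ((happly i).comp continuous_snd).mul
          ((pD_cont hFC _).comp (continuous_const.prodMk continuous_id))
      have hT2c : ∀ i, Continuous (T2 i) := fun i =>
        (((happly i).comp (hLc.add (hputc.sub continuous_snd))).mul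
          ((pD_cont hFC _).comp (continuous_const.prodMk continuous_id))).sub
          ((((mmF_cont hφc hφ1 (hfc t) hK hsuppt).comp continuous_fst).add
            continuous_const).mul (hfc t))
      have hT10 : ∀ i, ∀ p ∉ K, T1 i p = 0 := fun i p hp => by
        simp [hT1def, hx0 t ht p hp]
      have hT20 : ∀ i, ∀ p ∉ K, T2 i p = 0 := fun i p hp => by
        simp [hT2def, hv0 t ht p hp, hf0 t ht p hp]
      have hT1int : ∀ i, Integrable (T1 i) := fun i =>
        (hT1c i).integrable_of_hasCompactSupport (HasCompactSupport.intro hK (hT10 i))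
      have hT2int : ∀ i, Integrable (T2 i) := fun i =>
        (hT2c i).integrable_of_hasCompactSupport (HasCompactSupport.intro hK (hT20 i))
      have hT1zero : ∀ i, (∫ p : E3 × E3, T1 i p) = 0 := by
        intro i
        have hint := hT1int i
        rw [Measure.volume_eq_prod] at hint ⊢
        rw [integral_prod_symm _ hint]
        have hinner : ∀ v : E3, (∫ x : E3, T1 i (x, v)) = 0 := by
          intro v
          have hg : ContDiff ℝ 1 fun x' : E3 => f t x' v := contDiff_sect_x hFC t v
          have hgs : HasCompactSupport fun x' : E3 => f t x' v :=
            HasCompactSupport.intro (hK.image continuous_fst) fun x hx => by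
              by_contra h
              exact hx ⟨(x, v), hsuppt x v h, rfl⟩
          have h0 := integral_fderiv_apply_eq_zero hg hgs (EuclideanSpace.single i 1)
          calc (∫ x : E3, T1 i (x, v))
              = ∫ x : E3, v i * fderiv ℝ (fun x' => f t x' v) x (EuclideanSpace.single i 1) := by
                congr 1
                funext x
                rw [hT1def]
                simp only
                rw [fderiv_sect_x_apply hFC]
            _ = v i * ∫ x : E3, fderiv ℝ (fun x' => f t x' v) x (EuclideanSpace.single i 1) :=
                integral_const_mul _ _
            _ = 0 := by rw [h0, mul_zero]
        simp [hinner]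
      have hT2zero : ∀ i, (∫ p : E3 × E3, T2 i p) = 0 := by
        intro i
        have hint := hT2int i
        rw [Measure.volume_eq_prod] at hint ⊢
        rw [integral_prod _ hint]
        have hinner : ∀ x : E3, (∫ v : E3, T2 i (x, v)) = 0 := by
          intro x
          have hgs : HasCompactSupport
              fun v' : E3 => (Lop φ f t x v' + (u t x - v')) i * f t x v' :=
            HasCompactSupport.intro (hK.image continuous_snd) fun v hv => by
              have hz : f t x v = 0 := by
                by_contra h
                exact hv ⟨(x, v), hsuppt x v h, rfl⟩
              simp [hz]
          have hg : ContDiff ℝ 1 fun v' : E3 => (Lop φ f t x v' + (u t x - v')) i * f t x v' := by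
            have hfun : (fun v' : E3 => (Lop φ f t x v' + (u t x - v')) i)
                = fun v' : E3 => ((AAF φ f t x) i + (u t x) i) - (mmF φ f t x + 1) * v' i := by
              funext v'
              rw [Lop_eq hφc (hfc t) hK hsuppt x v']
              simp only [PiLp.add_apply, PiLp.sub_apply, PiLp.smul_apply, smul_eq_mul]
              ring
            have : (fun v' : E3 => (Lop φ f t x v' + (u t x - v')) i * f t x v')
                = fun v' : E3 => (((AAF φ f t x) i + (u t x) i) - (mmF φ f t x + 1) * v' i)
                    * f t x v' := by
              funext v'
              rw [congrFun hfun v']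
            rw [this]
            exact (contDiff_const.sub (contDiff_const.mul
              ((EuclideanSpace.proj (𝕜 := ℝ) i).contDiff))).mul (contDiff_sect_v hFC t x)
          have h0 := integral_fderiv_apply_eq_zero hg hgs (EuclideanSpace.single i 1)
          calc (∫ v : E3, T2 i (x, v))
              = ∫ v : E3, fderiv ℝ (fun v' => (Lop φ f t x v' + (u t x - v')) i * f t x v') v
                  (EuclideanSpace.single i 1) := by
                congr 1
                funext v
                rw [hT2def]
                simp only
                rw [fderiv_flux_term hφc hFC hK hsuppt (u t x) x v i]
            _ = 0 := h0
        simp [hinner]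
      have hsum : (fun p : E3 × E3 => pD f (1, 0, 0) (t, p.1, p.2))
          = fun p : E3 × E3 => -((∑ i : Fin 3, T1 i p) + (∑ i : Fin 3, T2 i p)) :=
        funext fun p => hTsum t ht p.1 p.2
      have h2 : (∫ p : E3 × E3, pD f (1, 0, 0) (t, p.1, p.2)) = 0 := by
        rw [hsum, integral_neg,
          integral_add (integrable_finset_sum _ fun i _ => hT1int i)
            (integrable_finset_sum _ fun i _ => hT2int i),
          integral_finset_sum _ fun i _ => hT1int i,
          integral_finset_sum _ fun i _ => hT2int i]
        simp [hT1zero, hT2zero]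
      have hd := hJd t
      rw [h1, h2] at hd
      exact hd
    have hJcont : ContinuousOn J (Set.Icc 0 T) := fun s _ =>
      ((hJd s).continuousAt).continuousWithinAt
    have hconst := constant_of_has_deriv_right_zero hJcont fun s hs =>
      ((hJzero s ⟨hs.1, hs.2.le⟩).hasDerivWithinAt)
    intro t ht
    have e1 : (∫ p : E3 × E3, f t p.1 p.2) = J t :=
      (setIntegral_eq_integral_of_forall_compl_eq_zero fun p hp => hf0 t ht p hp).symm
    have e2 : (∫ p : E3 × E3, f 0 p.1 p.2) = J 0 :=
      (setIntegral_eq_integral_of_forall_compl_eq_zero fun p hp =>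
        hf0 0 ⟨le_rfl, hT⟩ p hp).symm
    rw [e1, e2]
    exact hconst t ht
  -- crude bound on mmF
  have hKm : MeasurableSet K := hK.isClosed.measurableSet
  obtain ⟨B, hB⟩ : ∃ B : ℝ, ∀ t ∈ Set.Icc (0:ℝ) T, ∀ x : E3, |mmF φ f t x| ≤ B := by
    obtain ⟨C, hC⟩ := ((isCompact_Icc (a := (0:ℝ)) (b := T)).prod hK).exists_bound_of_continuousOn
      hFc.continuousOn
    refine ⟨C * (volume K).toReal, fun t ht x => ?_⟩
    have hbint : Integrable (K.indicator fun _ : E3 × E3 => C) :=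
      (integrable_indicator_iff hKm).2 (integrableOn_const hK.measure_lt_top.ne)
    have hnorm : ‖∫ p : E3 × E3, φ (dist x p.1) * f t p.1 p.2‖
        ≤ ∫ p : E3 × E3, K.indicator (fun _ => C) p := by
      refine norm_integral_le_of_norm_le hbint (Filter.Eventually.of_forall fun p => ?_)
      by_cases hp : p ∈ K
      · rw [Set.indicator_of_mem hp]
        have h1 : |φ (dist x p.1)| ≤ 1 := hφ1 _ dist_nonneg
        have h2 : ‖f t p.1 p.2‖ ≤ C := hC (t, p) ⟨ht, hp⟩
        calc ‖φ (dist x p.1) * f t p.1 p.2‖ = |φ (dist x p.1)| * ‖f t p.1 p.2‖ := by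
              rw [norm_mul]; rfl
          _ ≤ 1 * C := mul_le_mul h1 h2 (norm_nonneg _) zero_le_one
          _ = C := one_mul C
      · rw [Set.indicator_of_notMem hp]
        simp [hf0 t ht p hp]
    rw [integral_indicator_const _ hKm] at hnorm
    rw [mmF]
    calc |∫ p : E3 × E3, φ (dist x p.1) * f t p.1 p.2|
        = ‖∫ p : E3 × E3, φ (dist x p.1) * f t p.1 p.2‖ := rfl
      _ ≤ (volume K).toReal • C := hnorm
      _ = C * (volume K).toReal := by rw [smul_eq_mul, mul_comm]
  -- derivative at an extremum point
  have hcrit : ∀ t ∈ Set.Icc (0:ℝ) T, ∀ p : E3 × E3,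
      fderiv ℝ (fun x' => f t x' p.2) p.1 = 0 →
      fderiv ℝ (fun v' => f t p.1 v') p.2 = 0 →
      pD f (1, 0, 0) (t, p.1, p.2) = 3 * (mmF φ f t p.1 + 1) * f t p.1 p.2 := by
    intro t ht p hgx hgv
    rw [hTsum t ht p.1 p.2]
    have e1 : ∀ i : Fin 3, pD f (0, EuclideanSpace.single i 1, 0) (t, p.1, p.2) = 0 := fun i => by
      rw [← fderiv_sect_x_apply hFC t p.1 p.2, hgx]
      simp
    have e2 : ∀ i : Fin 3, pD f (0, 0, EuclideanSpace.single i 1) (t, p.1, p.2) = 0 := fun i => by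
      rw [← fderiv_sect_v_apply hFC t p.1 p.2, hgv]
      simp
    simp only [e1, e2, mul_zero, zero_mul, zero_sub, Finset.sum_const, Finset.card_univ,
      Fintype.card_fin, nsmul_eq_mul, Finset.sum_neg_distrib]
    push_cast
    ring
  -- positivity of f
  have hglobf : ∀ t ∈ Set.Icc (0:ℝ) T, ∀ p' : E3 × E3,
      f t p'.1 p'.2 ≤ sSup ((fun p : E3 × E3 => f t p.1 p.2) '' S) := by
    intro t ht p'
    have hbddi : BddAbove ((fun p : E3 × E3 => f t p.1 p.2) '' S) := (hS.image (hfc t)).bddAbove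
    by_cases hp' : p' ∈ K
    · exact le_csSup hbddi (Set.mem_image_of_mem _ (Set.mem_insert_of_mem q hp'))
    · rw [hf0 t ht p' hp']
      have hzq : (fun p : E3 × E3 => f t p.1 p.2) q = 0 := hf0 t ht q hq
      calc (0:ℝ) = f t q.1 q.2 := hzq.symm
        _ ≤ _ := le_csSup hbddi (Set.mem_image_of_mem _ (Set.mem_insert q K))
  have hpos : ∀ t ∈ Set.Icc (0:ℝ) T, ∀ p : E3 × E3, 0 ≤ f t p.1 p.2 := by
    have hGc : Continuous fun p : ℝ × E3 × E3 => -(f p.1 p.2.1 p.2.2) := hFc.neg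
    have hGd : ∀ x v : E3, Differentiable ℝ fun s => -(f s x v) := fun x v s =>
      ((hasDerivAt_sect_t hFC s x v).differentiableAt).neg
    have hpDeq : (fun z : ℝ × E3 × E3 => deriv (fun s => -(f s z.2.1 z.2.2)) z.1)
        = fun z => -(pD f (1, 0, 0) z) := by
      funext z
      exact ((hasDerivAt_sect_t hFC z.1 z.2.1 z.2.2).neg).deriv
    have hkeyneg : ∀ t ∈ Set.Icc (0:ℝ) T, ∀ p : E3 × E3,
        (∀ p' : E3 × E3, -(f t p'.1 p'.2) ≤ -(f t p.1 p.2)) →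
        deriv (fun s => -(f s p.1 p.2)) t ≤ (3 * B + 3) * -(f t p.1 p.2) := by
      intro t ht p hmax
      have hN : 0 ≤ -(f t p.1 p.2) := by
        have h1 := hmax q
        rw [hf0 t ht q hq] at h1
        simpa using h1
      have hminx : IsLocalMin (fun x' => f t x' p.2) p.1 :=
        Filter.Eventually.of_forall fun x' => by
          have := hmax (x', p.2)
          simp only [neg_le_neg_iff] at this
          simpa using this
      have hminv : IsLocalMin (fun v' => f t p.1 v') p.2 :=
        Filter.Eventually.of_forall fun v' => by
          have := hmax (p.1, v')
          simp only [neg_le_neg_iff] at this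
          simpa using this
      have hc := hcrit t ht p hminx.fderiv_eq_zero hminv.fderiv_eq_zero
      have hd : deriv (fun s => -(f s p.1 p.2)) t = -(pD f (1, 0, 0) (t, p.1, p.2)) :=
        ((hasDerivAt_sect_t hFC t p.1 p.2).neg).deriv
      rw [hd, hc]
      have heq2 : -(3 * (mmF φ f t p.1 + 1) * f t p.1 p.2)
          = (3 * (mmF φ f t p.1 + 1)) * -(f t p.1 p.2) := by ring
      rw [heq2]
      refine mul_le_mul_of_nonneg_right ?_ hN
      have := abs_le.mp (hB t ht p.1)
      linarith
    have hglobneg : ∀ t ∈ Set.Icc (0:ℝ) T, ∀ p' : E3 × E3,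
        -(f t p'.1 p'.2) ≤ sSup ((fun p : E3 × E3 => -(f t p.1 p.2)) '' S) := by
      intro t ht p'
      have hbddi : BddAbove ((fun p : E3 × E3 => -(f t p.1 p.2)) '' S) :=
        (hS.image (hfc t).neg).bddAbove
      by_cases hp' : p' ∈ K
      · exact le_csSup hbddi (Set.mem_image_of_mem _ (Set.mem_insert_of_mem q hp'))
      · rw [hf0 t ht p' hp']
        have hzq : -(f t q.1 q.2) = 0 := by rw [hf0 t ht q hq]; exact neg_zero
        calc -(0:ℝ) = -(f t q.1 q.2) := by rw [hzq]; ring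
          _ ≤ _ := le_csSup hbddi (Set.mem_image_of_mem _ (Set.mem_insert q K))
    have hδ0neg : sSup ((fun p : E3 × E3 => -(f 0 p.1 p.2)) '' S) ≤ 0 :=
      csSup_le (hSne.image _) (by
        rintro y ⟨p, hp, rfl⟩
        show -(f 0 p.1 p.2) ≤ 0
        rw [hf.init]
        exact neg_nonpos.mpr (hf₀ _ _))
    have hsup1 := sup_gronwall (fun s x v => -(f s x v)) hGc hGd
      (by rw [hpDeq]; exact (pD_cont hFC _).neg) S hS hSne
      (T' := T) (c := 3 * B + 3) (δ := 0) hkeyneg hglobneg hδ0neg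
    intro t ht p
    by_cases hp : p ∈ K
    · have h1 : -(f t p.1 p.2) ≤ sSup ((fun p : E3 × E3 => -(f t p.1 p.2)) '' S) :=
        le_csSup ((hS.image (hfc t).neg).bddAbove)
          (Set.mem_image_of_mem _ (Set.mem_insert_of_mem q hp))
      have h2 := hsup1 t ht
      rw [zero_mul] at h2
      linarith
    · rw [hf0 t ht p hp]
  -- refined bound on mmF
  have hmA : ∀ t ∈ Set.Icc (0:ℝ) T, ∀ x : E3,
      mmF φ f t x ≤ ∫ p : E3 × E3, |f₀ p.1 p.2| := by
    intro t ht x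
    have hsuppt : ∀ a b : E3, f t a b ≠ 0 → (a, b) ∈ K := fun a b => hKsupp t ht a b
    have h1 : mmF φ f t x ≤ ∫ p : E3 × E3, f t p.1 p.2 := by
      rw [mmF]
      refine integral_mono (kernel_integrable hφc (hfc t) hK hsuppt x)
        ((hfc t).integrable_of_hasCompactSupport
          (HasCompactSupport.intro hK fun p hp => hf0 t ht p hp)) fun p => ?_
      have hfp : 0 ≤ f t p.1 p.2 := hpos t ht p
      have hφle : φ (dist x p.1) ≤ 1 := le_of_abs_le (hφ1 _ dist_nonneg)
      exact mul_le_of_le_one_left hfp hφle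
    have h3 : (∫ p : E3 × E3, f 0 p.1 p.2) = ∫ p : E3 × E3, |f₀ p.1 p.2| := by
      congr 1
      funext p
      rw [hf.init, abs_of_nonneg (hf₀ _ _)]
    exact h1.trans_eq ((hJ t ht).trans h3)
  -- final Gronwall
  set A : ℝ := ∫ p : E3 × E3, |f₀ p.1 p.2| with hA
  have h0T : (0:ℝ) ∈ Set.Icc (0:ℝ) T := ⟨le_rfl, hT⟩
  have hf₀c : Continuous fun p : E3 × E3 => f₀ p.1 p.2 := by
    have heq : (fun p : E3 × E3 => f₀ p.1 p.2) = fun p : E3 × E3 => f 0 p.1 p.2 :=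
      funext fun p => (hf.init p.1 p.2).symm
    rw [heq]
    exact hfc 0
  have hf₀le : ∀ p : E3 × E3, f₀ p.1 p.2
      ≤ sSup ((fun p : E3 × E3 => f 0 p.1 p.2) '' S) := fun p => by
    rw [← hf.init]
    exact hglobf 0 h0T p
  have hbddf₀ : BddAbove (Set.range fun p : E3 × E3 => f₀ p.1 p.2) := by
    refine ⟨sSup ((fun p : E3 × E3 => f 0 p.1 p.2) '' S), ?_⟩
    rintro y ⟨p, rfl⟩
    exact hf₀le p
  have hδ0f : sSup ((fun p : E3 × E3 => f 0 p.1 p.2) '' S)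
      ≤ ⨆ p : E3 × E3, f₀ p.1 p.2 :=
    csSup_le (hSne.image _) (by
      rintro y ⟨p, hp, rfl⟩
      show f 0 p.1 p.2 ≤ _
      rw [hf.init]
      exact le_ciSup hbddf₀ p)
  have hkeyf : ∀ t ∈ Set.Icc (0:ℝ) T, ∀ p : E3 × E3,
      (∀ p' : E3 × E3, f t p'.1 p'.2 ≤ f t p.1 p.2) →
      deriv (fun s => f s p.1 p.2) t ≤ (3 * (1 + A)) * f t p.1 p.2 := by
    intro t ht p hmax
    have hN : 0 ≤ f t p.1 p.2 := by
      have h1 := hmax q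
      rw [hf0 t ht q hq] at h1
      exact h1
    have hmaxx : IsLocalMax (fun x' => f t x' p.2) p.1 :=
      Filter.Eventually.of_forall fun x' => by simpa using hmax (x', p.2)
    have hmaxv : IsLocalMax (fun v' => f t p.1 v') p.2 :=
      Filter.Eventually.of_forall fun v' => by simpa using hmax (p.1, v')
    have hc := hcrit t ht p hmaxx.fderiv_eq_zero hmaxv.fderiv_eq_zero
    have hd : deriv (fun s => f s p.1 p.2) t = pD f (1, 0, 0) (t, p.1, p.2) :=
      (hasDerivAt_sect_t hFC t p.1 p.2).deriv
    rw [hd, hc]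
    refine mul_le_mul_of_nonneg_right ?_ hN
    have := hmA t ht p.1
    linarith
  have hsup2 := sup_gronwall f hFc
    (fun x v s => (hasDerivAt_sect_t hFC s x v).differentiableAt)
    (by
      have hpDeq : (fun z : ℝ × E3 × E3 => deriv (fun s => f s z.2.1 z.2.2) z.1)
          = fun z => pD f (1, 0, 0) z := by
        funext z
        exact (hasDerivAt_sect_t hFC z.1 z.2.1 z.2.2).deriv
      rw [hpDeq]
      exact pD_cont hFC _) S hS hSne
    (T' := T) (c := 3 * (1 + A)) (δ := ⨆ p : E3 × E3, f₀ p.1 p.2) hkeyf hglobf hδ0f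
  have hM := hsup2 T' ⟨hT'.1, hT'.2⟩
  have hfin : (⨆ p : E3 × E3, f T' p.1 p.2)
      ≤ sSup ((fun p : E3 × E3 => f T' p.1 p.2) '' S) :=
    ciSup_le fun p => hglobf T' hT' p
  exact hfin.trans hM
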